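/- Let t ≥ 2 be an integer, let μ ⊆ λ be partitions with λ/μ tileable by t-ribbons, and let n ≥ l(λ). Then sgn_t(λ/μ) = sgn(w_t(λ;n)) · sgn(w_t(μ;n)). -/

import Mathlib

open scoped BigOperators

noncomputable section

/-! ## The ring of symmetric functions and basic operators -/

/-- The ring of symmetric functions `Λ` (with coefficients in `ℚ`, so that the
half occurring in the definition of `sp_λ` is available), realised as the
polynomial ring in the algebraically independent complete homogeneous symmetric
functions `h₁, h₂, h₃, …`; the variable `n : ℕ` stands for `h_{n+1}`. -/
abbrev SymF : Type := MvPolynomial ℕ ℚ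

/-- The complete homogeneous symmetric function `h_r ∈ Λ`, with `h_0 = 1` and
`h_r = 0` for `r < 0`. -/
def hh (r : ℤ) : SymF :=
  if r < 0 then 0 else if r = 0 then 1 else MvPolynomial.X (r.toNat - 1)

/-- The algebra homomorphism `φ_t : Λ → Λ` determined by `φ_t h_r = h_{r/t}`
if `t ∣ r` and `φ_t h_r = 0` otherwise. -/
def phi (t : ℕ) : SymF →ₐ[ℚ] SymF :=
  MvPolynomial.aeval fun n =>
    if t ∣ (n + 1) then hh (((n + 1) / t : ℕ) : ℤ) else 0

/-- The elementary symmetric function `e_r`, via the Jacobi–Trudi determinant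
`e_r = s_{(1^r)} = det_{1 ≤ i,j ≤ r}(h_{1 - i + j})`. -/
def ee (r : ℕ) : SymF :=
  Matrix.det (Matrix.of fun i j : Fin r => hh (1 + (j : ℤ) - (i : ℤ)))

/-- The involution `ω : Λ → Λ`, determined by `ω h_r = e_r`. -/
def omegaSym : SymF →ₐ[ℚ] SymF :=
  MvPolynomial.aeval fun n => ee (n + 1)

/-- `(-1)^z` for an integer exponent `z`. -/
def msign (z : ℤ) : ℤ := if Even z then 1 else -1

/-! ## Partitions -/

/-- A partition, encoded as a weakly decreasing, eventually zero function
`ℕ → ℕ` (0-indexed: `f i` is the part `λ_{i+1}`). -/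
def IsPartition (f : ℕ → ℕ) : Prop :=
  Antitone f ∧ ∃ N, ∀ i, N ≤ i → f i = 0

/-- The length `l(λ)` (number of nonzero parts). -/
def plen (f : ℕ → ℕ) : ℕ := sInf {N | ∀ i, N ≤ i → f i = 0}

/-- Containment `μ ⊆ λ` of partitions. -/
def SubP (mu lam : ℕ → ℕ) : Prop := ∀ i, mu i ≤ lam i

/-- The conjugate partition `λ'`. -/
def conjP (f : ℕ → ℕ) : ℕ → ℕ := fun j => Set.ncard {i | j < f i}

/-- The Frobenius rank `rk(λ)` (side length of the Durfee square). -/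
def rk (f : ℕ → ℕ) : ℕ := Set.ncard {i | i < f i}

/-- The size `|λ|` of a partition. -/
def psize (f : ℕ → ℕ) : ℕ := ∑ i ∈ Finset.range (plen f), f i

/-- `λ` is `z`-asymmetric, i.e. `λ = (a | a + z)` in Frobenius notation, which
amounts to `λ'_i = λ_i + z` for all `1 ≤ i ≤ rk(λ)`.  `(-1)`-asymmetric
partitions are called orthogonal, `1`-asymmetric ones symplectic, and
`0`-asymmetric ones are exactly the self-conjugate ones. -/
def ZAsymmetric (z : ℤ) (f : ℕ → ℕ) : Prop :=
  ∀ i < rk f, (conjP f i : ℤ) = (f i : ℤ) + z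

/-- The one-row partition `(c)`. -/
def rowP (c : ℕ) : ℕ → ℕ := fun i => if i = 0 then c else 0

/-- `λ` is a `t`-core: no box of the Young diagram has hook length `t`
(the hook length of the box `(i,j)` is `λ_i + λ'_j - i - j + 1`, 1-indexed). -/
def IsTCore (t : ℕ) (f : ℕ → ℕ) : Prop :=
  ∀ i j, j < f i → f i + conjP f j ≠ i + j + 1 + t

/-! ## Schur functions and universal characters via Jacobi–Trudi determinants -/

/-- The Jacobi–Trudi determinant `det_{1 ≤ i,j ≤ n}(h_{λ_i - μ_j - i + j})`. -/
def sSkewN (lam mu : ℕ → ℕ) (n : ℕ) : SymF :=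
  Matrix.det (Matrix.of fun i j : Fin n =>
    hh ((lam i : ℤ) - (mu j : ℤ) - (i : ℤ) + (j : ℤ)))

open Classical in
/-- The skew Schur function `s_{λ/μ}`, defined by the Jacobi–Trudi formula
(and `0` if `μ ⊄ λ`). -/
def sSkew (lam mu : ℕ → ℕ) : SymF :=
  if SubP mu lam then sSkewN lam mu (plen lam) else 0

/-- The Schur function `s_λ`. -/
def sFun (lam : ℕ → ℕ) : SymF := sSkew lam fun _ => 0

/-- The universal orthogonal character
`o_λ = det_{1 ≤ i,j ≤ n}(h_{λ_i - i + j} - h_{λ_i - i - j})`. -/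
def oU (lam : ℕ → ℕ) : SymF :=
  Matrix.det (Matrix.of fun i j : Fin (plen lam) =>
    hh ((lam i : ℤ) - (i : ℤ) + (j : ℤ)) -
      hh ((lam i : ℤ) - (i : ℤ) - (j : ℤ) - 2))

/-- The universal symplectic character
`sp_λ = (1/2) · det_{1 ≤ i,j ≤ n}(h_{λ_i - i + j} + h_{λ_i - i - j + 2})`. -/
def spU (lam : ℕ → ℕ) : SymF :=
  (1 / 2 : ℚ) • Matrix.det (Matrix.of fun i j : Fin (plen lam) =>
    hh ((lam i : ℤ) - (i : ℤ) + (j : ℤ)) +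
      hh ((lam i : ℤ) - (i : ℤ) - (j : ℤ)))

/-- The universal odd orthogonal character
`so_λ = det_{1 ≤ i,j ≤ n}(h_{λ_i - i + j} + h_{λ_i - i - j + 1})`. -/
def soU (lam : ℕ → ℕ) : SymF :=
  Matrix.det (Matrix.of fun i j : Fin (plen lam) =>
    hh ((lam i : ℤ) - (i : ℤ) + (j : ℤ)) +
      hh ((lam i : ℤ) - (i : ℤ) - (j : ℤ) - 1))

/-- The variant `so⁻_λ = det_{1 ≤ i,j ≤ n}(h_{λ_i - i + j} - h_{λ_i - i - j + 1})`. -/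
def soMinusU (lam : ℕ → ℕ) : SymF :=
  Matrix.det (Matrix.of fun i j : Fin (plen lam) =>
    hh ((lam i : ℤ) - (i : ℤ) + (j : ℤ)) -
      hh ((lam i : ℤ) - (i : ℤ) - (j : ℤ) - 1))

/-- The rational universal character `rs_{λ,μ}` (one alphabet), via Koike's block
determinant, for weakly decreasing integer sequences `λ`, `μ` of lengths `n`, `m`. -/
def rsN (n m : ℕ) (lam mu : ℕ → ℤ) : SymF :=
  Matrix.det (Matrix.fromBlocks
    (Matrix.of fun i j : Fin n => hh (lam i - (i : ℤ) + (j : ℤ)))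
    (Matrix.of fun (i : Fin n) (j : Fin m) => hh (lam i - (i : ℤ) - (j : ℤ) - 1))
    (Matrix.of fun (i : Fin m) (j : Fin n) => hh (mu i - (i : ℤ) - (j : ℤ) - 1))
    (Matrix.of fun i j : Fin m => hh (mu i - (i : ℤ) + (j : ℤ))))

/-- `rs_{λ,μ}` for partitions `λ`, `μ`. -/
def rsP (lam mu : ℕ → ℕ) : SymF :=
  rsN (plen lam) (plen mu) (fun i => (lam i : ℤ)) fun i => (mu i : ℤ)

/-! ## Beta sets, cores, quotients and signs -/

/-- The beta set `β(λ; N) = {λ_i + N - i : 1 ≤ i ≤ N}`. -/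
def betaSet (lam : ℕ → ℕ) (N : ℕ) : Finset ℕ :=
  (Finset.range N).image fun i => lam i + (N - 1 - i)

/-- `m_r(λ; N)`: the number of elements of `β(λ; N)` congruent to `r` mod `t`. -/
def mr (t : ℕ) (lam : ℕ → ℕ) (N r : ℕ) : ℕ :=
  ((betaSet lam N).filter fun x => x % t = r).card

/-- The `r`-th component `λ^{(r)}` of the `t`-quotient of `λ` (computed, as per
the convention of the paper, from a beta set whose size is a multiple of `t`):
writing the elements of `β(λ; N)` in residue class `r` as `ξ_k t + r` with
`ξ_1 > ⋯ > ξ_m ≥ 0`, the `k`-th part is `ξ_k - m + k`. -/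
def tQuot (t : ℕ) (lam : ℕ → ℕ) (r : ℕ) : ℕ → ℕ := fun k =>
  let N := t * (plen lam + 1)
  let S := (betaSet lam N).filter fun x => x % t = r
  if k < S.card then (S.sort (· ≤ ·)).getD (S.card - 1 - k) 0 / t + (k + 1) - S.card
  else 0

/-- The `t`-core of `λ`: its `i`-th part is `ξ̃_i - N + i` where
`ξ̃_1 > ⋯ > ξ̃_N` are the integers `k t + r`, `0 ≤ k < m_r(λ; N)`, `0 ≤ r < t`. -/
def tCore (t : ℕ) (lam : ℕ → ℕ) : ℕ → ℕ := fun i =>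
  let N := t * (plen lam + 1)
  let T := (Finset.range t).biUnion fun r =>
    (Finset.range (mr t lam N r)).image fun k => k * t + r
  if i < N then (T.sort (· ≤ ·)).getD (N - 1 - i) 0 + (i + 1) - N else 0

/-- The sign of the permutation `w_t(λ; N)` sorting the beta set so that the
residues mod `t` increase and the entries within a residue class decrease,
computed as `(-1)` to the number of inversions: an inversion is a pair
`x > y` of elements of the beta set with `x mod t > y mod t`. -/
def sgnW (t : ℕ) (lam : ℕ → ℕ) (N : ℕ) : ℤ :=
  (-1) ^ ((betaSet lam N ×ˢ betaSet lam N).filter fun p : ℕ × ℕ =>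
    p.2 < p.1 ∧ p.2 % t < p.1 % t).card

/-! ## Ribbons and tileability -/

/-- The cells of the skew shape `λ/μ` (0-indexed rows and columns). -/
def SkewCells (lam mu : ℕ → ℕ) : Set (ℕ × ℕ) := {c | mu c.1 ≤ c.2 ∧ c.2 < lam c.1}

/-- Two cells are adjacent if they share an edge. -/
def CellAdj (c d : ℕ × ℕ) : Prop :=
  (c.1 = d.1 ∧ (c.2 + 1 = d.2 ∨ d.2 + 1 = c.2)) ∨
    (c.2 = d.2 ∧ (c.1 + 1 = d.1 ∨ d.1 + 1 = c.1))

/-- A set of cells is (edge-)connected. -/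
def ConnectedCells (S : Set (ℕ × ℕ)) : Prop :=
  ∀ c ∈ S, ∀ d ∈ S, Relation.ReflTransGen (fun x y => x ∈ S ∧ y ∈ S ∧ CellAdj x y) c d

/-- The set of cells contains a `2 × 2` square. -/
def Has2x2 (S : Set (ℕ × ℕ)) : Prop :=
  ∃ i j, (i, j) ∈ S ∧ (i + 1, j) ∈ S ∧ (i, j + 1) ∈ S ∧ (i + 1, j + 1) ∈ S

/-- The skew shape `λ/μ` is a `t`-ribbon: connected, `t` cells, no `2 × 2` square. -/
def IsRibbon (t : ℕ) (lam mu : ℕ → ℕ) : Prop :=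
  SubP mu lam ∧ (SkewCells lam mu).ncard = t ∧
    ConnectedCells (SkewCells lam mu) ∧ ¬Has2x2 (SkewCells lam mu)

/-- The height of a ribbon `λ/μ`: one less than the number of rows it occupies. -/
def ribbonHeight (lam mu : ℕ → ℕ) : ℕ :=
  (Prod.fst '' SkewCells lam mu).ncard - 1

/-- `ν` (as `ν 0, ν 1, …, ν k`) is a ribbon decomposition of the skew shape
`λ/μ` into `t`-ribbons: `ν 0 = μ`, `ν k = λ`, every `ν i` is a partition, and
each `ν (i+1) / ν i` is a `t`-ribbon. -/
def IsRibbonDecomp (t : ℕ) (mu lam : ℕ → ℕ) (k : ℕ) (ν : ℕ → ℕ → ℕ) : Prop :=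
  ν 0 = mu ∧ ν k = lam ∧ (∀ i ≤ k, IsPartition (ν i)) ∧
    ∀ i < k, IsRibbon t (ν (i + 1)) (ν i)

/-- The height of a ribbon decomposition: the sum of the heights of its ribbons.
The sign `sgn_t(λ/μ)` is `(-1)` to this quantity (for any decomposition). -/
def decompHeight (ν : ℕ → ℕ → ℕ) (k : ℕ) : ℕ :=
  ∑ i ∈ Finset.range k, ribbonHeight (ν (i + 1)) (ν i)

/-- The skew shape `λ/μ` is tileable by `t`-ribbons. -/
def Tileable (t : ℕ) (mu lam : ℕ → ℕ) : Prop :=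
  ∃ k ν, IsRibbonDecomp t mu lam k ν

/-! ## The signs `ε` of Ayyer–Kumari -/

/-- The exponent `ε^o_{λ;nt}`. -/
def epsO (t : ℕ) (lam : ℕ → ℕ) (n : ℕ) : ℕ :=
  (∑ r ∈ Finset.Icc ((t + 2) / 2) (t - 1), Nat.choose (mr t lam (n * t) r + 1) 2)
    + rk (tCore t lam)
    + if 2 ∣ t then Nat.choose (n + 1) 2 + n * rk (tCore t lam) else 0

/-- The exponent `ε^sp_{λ;nt}`. -/
def epsSp (t : ℕ) (lam : ℕ → ℕ) (n : ℕ) : ℕ :=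
  (∑ r ∈ Finset.Icc (t / 2) (t - 2), Nat.choose (mr t lam (n * t) r + 1) 2)
    + if 2 ∣ t then Nat.choose (n + 1) 2 + n * rk (tCore t lam) else 0

/-- The exponent `ε^so_{λ;nt}`. -/
def epsSo (t : ℕ) (lam : ℕ → ℕ) (n : ℕ) : ℕ :=
  (∑ r ∈ Finset.Icc ((t + 1) / 2) (t - 1), Nat.choose (mr t lam (n * t) r + 1) 2)
    + if 2 ∣ t then 0 else n * rk (tCore t lam)

/-! ## Evaluation at a finite complex alphabet -/

/-- The complete homogeneous polynomial `h_r(y₁,…,y_N)` evaluated at complex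
numbers: the sum over all multisets of size `r` of the product of the values. -/
def hEval {N : ℕ} (y : Fin N → ℂ) (r : ℕ) : ℂ :=
  ∑ m ∈ (Finset.univ : Finset (Fin N)).sym r, (Multiset.map y (m : Multiset (Fin N))).prod

/-- Evaluation of a universal symmetric function at the finite alphabet
`y₁, …, y_N` (substituting `h_r ↦ h_r(y)`). -/
def evalSym {N : ℕ} (y : Fin N → ℂ) : SymF →ₐ[ℚ] ℂ :=
  MvPolynomial.aeval fun n => hEval y (n + 1)

/-- The Schur polynomial `s_λ(y₁,…,y_N)` (equal to the ratio of alternants when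
the `y_i` are distinct, and `0` when `l(λ) > N`). -/
def schurC {N : ℕ} (lam : ℕ → ℕ) (y : Fin N → ℂ) : ℂ := evalSym y (sFun lam)

/-- The algebra homomorphism `φ_t^q : Λ → Λ[q]` with
`φ_t^q h_{at+b} = q^b ∑_{k ≥ 0} q^{kt} h_{a-k}` for `a ≥ 0`, `0 ≤ b ≤ t-1`
(the sum is finite since `h_{a-k} = 0` for `k > a`). -/
def phiQ (t : ℕ) : SymF →ₐ[ℚ] Polynomial SymF :=
  MvPolynomial.aeval fun m =>
    ∑ k ∈ Finset.range ((m + 1) / t + 1),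
      Polynomial.C (hh ((((m + 1) / t - k : ℕ)) : ℤ)) *
        Polynomial.X ^ ((m + 1) % t + k * t)


/-! Adding a `t`-ribbon occupying rows `a, …, b` to `μ` changes the beta set `β(μ; N)` in a
single place: the beta number `x = μ_b + N - 1 - b` becomes `x + t = λ_a + N - 1 - a`, while the
beta numbers of rows `a, …, b - 1` reappear as those of rows `a + 1, …, b` of `λ`. These `b - a`
numbers are exactly the elements of the beta set strictly between `x` and `x + t`. Since `x` and
`x + t` have the same residue mod `t`, the move toggles the inversion status of `x` against each of
these elements (whose residues differ from that of `x`) and of no other one, so the ribbon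
multiplies `sgn w_t` by `(-1)^(b - a) = (-1)^ht`; induct along the decomposition. -/

section Inversions

open Finset

def IsInversion (t x y : ℕ) : Prop :=
  (y < x ∧ y % t < x % t) ∨ (x < y ∧ x % t < y % t)

instance (t x : ℕ) : DecidablePred (IsInversion t x) := fun y =>
  inferInstanceAs (Decidable ((y < x ∧ y % t < x % t) ∨ (x < y ∧ x % t < y % t)))

def invCount (t : ℕ) (S : Finset ℕ) : ℕ :=
  #{p ∈ S ×ˢ S | p.2 < p.1 ∧ p.2 % t < p.1 % t}

theorem sgnW_eq_neg_one_pow_invCount (t : ℕ) (f : ℕ → ℕ) (N : ℕ) :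
    sgnW t f N = (-1) ^ invCount t (betaSet f N) := rfl

theorem sgnW_mul_self (t : ℕ) (f : ℕ → ℕ) (N : ℕ) : sgnW t f N * sgnW t f N = 1 := by
  rw [sgnW, ← pow_add]
  exact Even.neg_one_pow ⟨_, rfl⟩

theorem invCount_insert {t x : ℕ} {T : Finset ℕ} (hx : x ∉ T) :
    invCount t (insert x T) = invCount t T + #{y ∈ T | IsInversion t x y} := by
  have hpair : ∀ y, (if IsInversion t x y then 1 else 0) =
      (if y < x ∧ y % t < x % t then 1 else 0) + (if x < y ∧ x % t < y % t then 1 else 0) := by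
    intro y
    rcases lt_trichotomy y x with h | rfl | h
    · simp [IsInversion, h, h.not_gt]
    · simp [IsInversion]
    · simp [IsInversion, h, h.not_gt]
  simp only [invCount, card_filter, sum_product, sum_insert hx, hpair, sum_add_distrib,
    lt_irrefl, false_and, if_false]
  ring

theorem neg_one_pow_card_filter_mul {α : Type*} {s : Finset α} {p q r : α → Prop}
    [DecidablePred p] [DecidablePred q] [DecidablePred r]
    (h : ∀ a ∈ s, r a ↔ Xor (p a) (q a)) :
    (-1 : ℤ) ^ #{a ∈ s | p a} * (-1) ^ #{a ∈ s | q a} = (-1) ^ #{a ∈ s | r a} := by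
  have hprod : ∀ (P : α → Prop) [DecidablePred P],
      (-1 : ℤ) ^ #{a ∈ s | P a} = ∏ a ∈ s, if P a then -1 else 1 := by
    intro P _
    rw [prod_ite, prod_const, prod_const_one, mul_one]
  rw [hprod p, hprod q, hprod r, ← prod_mul_distrib]
  refine prod_congr rfl fun a ha => ?_
  by_cases hp : p a <;> by_cases hq : q a <;> simp [hp, hq, h a ha, Xor]

theorem mod_ne_of_lt_of_lt_add {t x y : ℕ} (hxy : x < y) (hyx : y < x + t) : y % t ≠ x % t := by
  intro h
  have hdvd := Nat.sub_mod_eq_zero_of_mod_eq h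
  rw [Nat.mod_eq_of_lt (by omega)] at hdvd
  omega

theorem between_iff_xor_isInversion {t x y : ℕ} (hyx : y ≠ x) (hyxt : y ≠ x + t) :
    (x < y ∧ y < x + t) ↔ Xor (IsInversion t (x + t) y) (IsInversion t x y) := by
  rw [xor_iff_not_iff, IsInversion, IsInversion, Nat.add_mod_right]
  by_cases hxy : x < y ∧ y < x + t
  · have := mod_ne_of_lt_of_lt_add hxy.1 hxy.2
    omega
  · omega

theorem neg_one_pow_invCount_shift {t x : ℕ} {S : Finset ℕ} (hx : x ∈ S) (hxt : x + t ∉ S) :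
    (-1 : ℤ) ^ invCount t (insert (x + t) (S.erase x)) =
      (-1) ^ invCount t S * (-1) ^ #{y ∈ S | x < y ∧ y < x + t} := by
  set T := S.erase x
  have hS : insert x T = S := insert_erase hx
  have hxtT : x + t ∉ T := fun h => hxt (mem_of_mem_erase h)
  have hbetween : {y ∈ S | x < y ∧ y < x + t} = {y ∈ T | x < y ∧ y < x + t} := by
    rw [← hS, filter_insert, if_neg (by omega)]
  have hparity := neg_one_pow_card_filter_mul (s := T) (p := IsInversion t (x + t))
    (q := IsInversion t x) (r := fun y => x < y ∧ y < x + t) fun y hy =>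
      between_iff_xor_isInversion (ne_of_mem_erase hy) (fun h => hxtT (h ▸ hy))
  have hsq : (-1 : ℤ) ^ #{y ∈ T | IsInversion t x y} * (-1) ^ #{y ∈ T | IsInversion t x y} = 1 := by
    rw [← pow_add]
    exact Even.neg_one_pow ⟨_, rfl⟩
  rw [hbetween, ← hS, invCount_insert (notMem_erase x S), invCount_insert hxtT, ← hparity,
    pow_add, pow_add]
  linear_combination (-((-1 : ℤ) ^ invCount t T * (-1) ^ #{y ∈ T | IsInversion t (x + t) y})) * hsq

end Inversions

section Ribbons

open Finset

theorem IsPartition.eq_zero_of_plen_le {f : ℕ → ℕ} (hf : IsPartition f) {i : ℕ}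
    (hi : plen f ≤ i) : f i = 0 :=
  Nat.sInf_mem (s := {N | ∀ i, N ≤ i → f i = 0}) hf.2 i hi

theorem IsPartition.lt_plen_of_ne_zero {f : ℕ → ℕ} (hf : IsPartition f) {i : ℕ}
    (hi : f i ≠ 0) : i < plen f :=
  lt_of_not_ge fun h => hi (hf.eq_zero_of_plen_le h)

theorem plen_le_plen {f g : ℕ → ℕ} (hg : IsPartition g) (hfg : SubP f g) : plen f ≤ plen g :=
  Nat.sInf_le fun i hi => Nat.eq_zero_of_le_zero (hg.eq_zero_of_plen_le hi ▸ hfg i)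

theorem exists_vertical_pair_of_reflTransGen {S : Set (ℕ × ℕ)} {c d : ℕ × ℕ}
    (h : Relation.ReflTransGen (fun x y => x ∈ S ∧ y ∈ S ∧ CellAdj x y) c d) {i : ℕ}
    (hci : c.1 ≤ i) (hid : i < d.1) : ∃ j, (i, j) ∈ S ∧ (i + 1, j) ∈ S := by
  induction h using Relation.ReflTransGen.head_induction_on with
  | refl => omega
  | @head a b hab _ ih =>
    obtain ⟨haS, hbS, hadj⟩ := hab
    by_cases hbi : b.1 ≤ i
    · exact ih hbi
    · rcases hadj with ⟨hrow, -⟩ | ⟨hcol, hdown | hup⟩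
      · omega
      · have hia : i = a.1 := by omega
        subst hia
        exact ⟨a.2, haS, by rwa [hdown, hcol]⟩
      · omega

theorem succ_eq_of_not_has2x2 {lam mu : ℕ → ℕ} (hlam : Antitone lam) (hmu : Antitone mu)
    (h2x2 : ¬Has2x2 (SkewCells lam mu)) {i j : ℕ} (hij : (i, j) ∈ SkewCells lam mu)
    (hi1j : (i + 1, j) ∈ SkewCells lam mu) : mu i + 1 = lam (i + 1) := by
  simp only [SkewCells, Set.mem_ofPred_eq] at hij hi1j
  have hlam_succ : lam (i + 1) ≤ lam i := hlam (Nat.le_add_right i 1)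
  have hmu_succ : mu (i + 1) ≤ mu i := hmu (Nat.le_add_right i 1)
  by_contra hne
  refine h2x2 ⟨i, mu i, ?_, ?_, ?_, ?_⟩ <;> simp only [SkewCells, Set.mem_ofPred_eq] <;> omega

end Ribbons

section BorderStrips

open Finset

variable {t : ℕ} {lam mu : ℕ → ℕ} {a b : ℕ}

structure IsBorderStrip (lam mu : ℕ → ℕ) (a b : ℕ) : Prop where
  le : a ≤ b
  rows : ∀ i, mu i < lam i ↔ a ≤ i ∧ i ≤ b
  step : ∀ i, a ≤ i → i < b → mu i + 1 = lam (i + 1)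

theorem IsBorderStrip.eq_of_not_mem (hs : IsBorderStrip lam mu a b) (hsub : SubP mu lam)
    {i : ℕ} (hi : ¬(a ≤ i ∧ i ≤ b)) : lam i = mu i :=
  le_antisymm (not_lt.1 fun h => hi ((hs.rows i).1 h)) (hsub i)

theorem IsRibbon.exists_isBorderStrip (ht : 0 < t) (hlam : IsPartition lam) (hmu : IsPartition mu)
    (hr : IsRibbon t lam mu) : ∃ a b, IsBorderStrip lam mu a b := by
  obtain ⟨-, hcard, hconn, h2x2⟩ := hr
  set R := {i ∈ range (plen lam) | mu i < lam i}
  have hmemR : ∀ i, i ∈ R ↔ mu i < lam i := fun i => by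
    simp only [R, mem_filter, mem_range, and_iff_right_iff_imp]
    exact fun h => hlam.lt_plen_of_ne_zero (by omega)
  obtain ⟨c, hc⟩ := Set.nonempty_of_ncard_ne_zero (s := SkewCells lam mu) (by omega)
  have hRne : R.Nonempty := ⟨c.1, (hmemR _).2 (hc.1.trans_lt hc.2)⟩
  set a := R.min' hRne
  set b := R.max' hRne
  have ha : mu a < lam a := (hmemR _).1 (R.min'_mem hRne)
  have hb : mu b < lam b := (hmemR _).1 (R.max'_mem hRne)
  have hcross : ∀ i, a ≤ i → i < b → ∃ j, (i, j) ∈ SkewCells lam mu ∧ (i + 1, j) ∈ SkewCells lam mu :=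
    fun i hai hib => exists_vertical_pair_of_reflTransGen
      (hconn (a, mu a) ⟨le_rfl, ha⟩ (b, mu b) ⟨le_rfl, hb⟩) hai hib
  refine ⟨a, b, R.min'_le_max' hRne, fun i => ⟨fun hi => ?_, fun ⟨hai, hib⟩ => ?_⟩,
    fun i hai hib => ?_⟩
  · exact ⟨R.min'_le i ((hmemR i).2 hi), R.le_max' i ((hmemR i).2 hi)⟩
  · rcases hib.lt_or_eq with hib | rfl
    · obtain ⟨j, hj, -⟩ := hcross i hai hib
      exact hj.1.trans_lt hj.2
    · exact hb
  · obtain ⟨j, hj, hj'⟩ := hcross i hai hib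
    exact succ_eq_of_not_has2x2 hlam.1 hmu.1 h2x2 hj hj'

theorem ribbonHeight_eq_of_rows (hrows : ∀ i, mu i < lam i ↔ a ≤ i ∧ i ≤ b) :
    ribbonHeight lam mu = b - a := by
  have himg : Prod.fst '' SkewCells lam mu = Set.Icc a b := by
    ext i
    constructor
    · rintro ⟨c, hc, rfl⟩
      exact (hrows c.1).1 (hc.1.trans_lt hc.2)
    · intro hi
      exact ⟨(i, mu i), ⟨le_rfl, (hrows i).2 hi⟩, rfl⟩
  rw [ribbonHeight, himg, ← coe_Icc, Set.ncard_coe_finset, Nat.card_Icc]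
  omega

theorem ncard_skewCells_eq_sum {s : Finset ℕ} (hs : ∀ i, mu i < lam i → i ∈ s) :
    (SkewCells lam mu).ncard = ∑ i ∈ s, (lam i - mu i) := by
  have hcells : SkewCells lam mu = ↑(s.biUnion fun i => ({i} : Finset ℕ) ×ˢ Ico (mu i) (lam i)) := by
    ext ⟨i, j⟩
    simp only [SkewCells, Set.mem_ofPred_eq, coe_biUnion, mem_coe, coe_product, coe_singleton,
      coe_Ico, Set.mem_iUnion, Set.mem_prod, Set.mem_singleton_iff, Set.mem_Ico, exists_prop]
    constructor
    · intro h
      exact ⟨i, hs i (h.1.trans_lt h.2), rfl, h⟩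
    · rintro ⟨i, -, rfl, h⟩
      exact h
  rw [hcells, Set.ncard_coe_finset, card_biUnion]
  · simp
  · intro i _ j _ hij
    simp only [Function.onFun, disjoint_left, mem_product, mem_singleton]
    exact fun c hi hj => hij (hi.1 ▸ hj.1)

theorem add_sum_Icc_sub_of_succ_eq (hab : a ≤ b) (hsub : SubP mu lam)
    (hstep : ∀ i, a ≤ i → i < b → mu i + 1 = lam (i + 1)) :
    mu b + ∑ i ∈ Icc a b, (lam i - mu i) = lam a + (b - a) := by
  induction b, hab using Nat.le_induction with
  | base =>
    have := hsub a
    simp only [Icc_self, sum_singleton]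
    omega
  | succ m hm ih =>
    have hprev := ih fun i hai him => hstep i hai (by omega)
    have hm_step := hstep m hm (by omega)
    have := hsub (m + 1)
    rw [sum_Icc_succ_top (by omega)]
    omega

end BorderStrips

section BetaNumbers

open Finset

def betaNum (f : ℕ → ℕ) (N i : ℕ) : ℕ := f i + (N - 1 - i)

variable {t N : ℕ} {f lam mu : ℕ → ℕ} {a b : ℕ}

theorem mem_betaSet {y : ℕ} : y ∈ betaSet f N ↔ ∃ i < N, betaNum f N i = y := by
  simp [betaSet, betaNum]

theorem betaNum_lt_betaNum (hf : Antitone f) {i j : ℕ} (hij : i < j) (hjN : j < N) :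
    betaNum f N j < betaNum f N i := by
  have := hf hij.le
  unfold betaNum
  omega

theorem betaNum_injOn (hf : Antitone f) : Set.InjOn (betaNum f N) (Set.Iio N) := by
  intro i hi j hj hij
  by_contra hne
  rcases Nat.lt_or_gt_of_ne hne with h | h
  · exact (betaNum_lt_betaNum hf h hj).ne' hij
  · exact (betaNum_lt_betaNum hf h hi).ne hij

theorem betaSet_eq_insert_erase (hmu : Antitone mu) (hsub : SubP mu lam)
    (hs : IsBorderStrip lam mu a b) (hbN : b < N) :
    betaSet lam N = insert (betaNum lam N a) ((betaSet mu N).erase (betaNum mu N b)) := by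
  have hab := hs.le
  have hne : ∀ i < N, i ≠ b → betaNum mu N i ≠ betaNum mu N b := fun i hi hib =>
    (betaNum_injOn hmu).ne hi hbN hib
  ext y
  simp only [mem_insert, mem_erase, mem_betaSet]
  constructor
  · rintro ⟨i, hiN, rfl⟩
    by_cases hia : i = a
    · exact Or.inl (by rw [hia])
    refine Or.inr ?_
    by_cases hi : a < i ∧ i ≤ b
    · obtain ⟨j, rfl⟩ : ∃ j, i = j + 1 := ⟨i - 1, by omega⟩
      have := hs.step j (by omega) (by omega)
      have he : betaNum lam N (j + 1) = betaNum mu N j := by unfold betaNum; omega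
      exact he ▸ ⟨hne _ (by omega) (by omega), j, by omega, rfl⟩
    · have he : betaNum lam N i = betaNum mu N i := by
        rw [betaNum, betaNum, hs.eq_of_not_mem hsub (by omega)]
      exact he ▸ ⟨hne _ hiN (by omega), i, hiN, rfl⟩
  · rintro (rfl | ⟨hy, i, hiN, rfl⟩)
    · exact ⟨a, by omega, rfl⟩
    have hib : i ≠ b := fun h => hy (h ▸ rfl)
    by_cases hi : a ≤ i ∧ i < b
    · have := hs.step i hi.1 hi.2
      exact ⟨i + 1, by omega, by unfold betaNum; omega⟩
    · exact ⟨i, hiN, by rw [betaNum, betaNum, hs.eq_of_not_mem hsub (by omega)]⟩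

theorem betaNum_notMem_betaSet (hlam : Antitone lam) (hmu : Antitone mu) (hsub : SubP mu lam)
    (hs : IsBorderStrip lam mu a b) (hbN : b < N) :
    betaNum lam N a ∉ betaSet mu N := by
  have hab := hs.le
  rw [mem_betaSet]
  rintro ⟨i, hiN, he⟩
  by_cases hia : i < a
  · have := betaNum_lt_betaNum hlam hia (by omega : a < N)
    rw [betaNum, ← hs.eq_of_not_mem hsub (by omega)] at he
    exact this.ne' he
  · have hle : betaNum mu N i ≤ betaNum mu N a := by
      rcases (not_lt.1 hia).lt_or_eq with h | rfl
      · exact (betaNum_lt_betaNum hmu h hiN).le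
      · exact le_rfl
    have := (hs.rows a).2 ⟨le_rfl, hs.le⟩
    unfold betaNum at hle he
    omega

theorem card_betaSet_between (hlam : Antitone lam) (hmu : Antitone mu) (hsub : SubP mu lam)
    (hs : IsBorderStrip lam mu a b) (hbN : b < N) :
    #{y ∈ betaSet mu N | betaNum mu N b < y ∧ y < betaNum lam N a} = b - a := by
  have hab := hs.le
  have hset : {y ∈ betaSet mu N | betaNum mu N b < y ∧ y < betaNum lam N a} =
      (Ico a b).image (betaNum mu N) := by
    ext y
    simp only [mem_filter, mem_image, mem_Ico, mem_betaSet]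
    constructor
    · rintro ⟨⟨i, hiN, rfl⟩, hbi, hia⟩
      refine ⟨i, ⟨not_lt.1 fun h => ?_, not_le.1 fun h => ?_⟩, rfl⟩
      · have := betaNum_lt_betaNum hlam h (by omega : a < N)
        rw [betaNum, ← hs.eq_of_not_mem hsub (by omega)] at hia
        exact hia.not_gt this
      · rcases h.lt_or_eq with h | rfl
        · exact (betaNum_lt_betaNum hmu h hiN).not_gt hbi
        · exact hbi.false
    · rintro ⟨i, ⟨hai, hib⟩, rfl⟩
      have he : betaNum lam N (i + 1) = betaNum mu N i := by
        have := hs.step i hai hib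
        unfold betaNum
        omega
      exact ⟨⟨i, by omega, rfl⟩, betaNum_lt_betaNum hmu hib hbN,
        he ▸ betaNum_lt_betaNum hlam (by omega) (by omega)⟩
  rw [hset, card_image_of_injOn ((betaNum_injOn hmu).mono fun i hi => by
    simp only [coe_Ico, Set.mem_Ico] at hi; exact Set.mem_Iio.2 (by omega)), Nat.card_Ico]

theorem sgnW_eq_of_isRibbon (ht : 0 < t) (hlam : IsPartition lam) (hmu : IsPartition mu)
    (hr : IsRibbon t lam mu) (hN : plen lam ≤ N) :
    sgnW t lam N = sgnW t mu N * (-1) ^ ribbonHeight lam mu := by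
  obtain ⟨a, b, hs⟩ := hr.exists_isBorderStrip ht hlam hmu
  have hsize : mu b + t = lam a + (b - a) := by
    rw [← hr.2.1, ncard_skewCells_eq_sum (s := Icc a b) fun i hi => mem_Icc.2 ((hs.rows i).1 hi)]
    exact add_sum_Icc_sub_of_succ_eq hs.le hr.1 hs.step
  have hbN : b < N := by
    have := (hs.rows b).2 ⟨hs.le, le_rfl⟩
    exact (hlam.lt_plen_of_ne_zero (by omega)).trans_le hN
  have hshift : betaNum lam N a = betaNum mu N b + t := by
    have := hs.le
    unfold betaNum
    omega
  rw [sgnW_eq_neg_one_pow_invCount, sgnW_eq_neg_one_pow_invCount,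
    betaSet_eq_insert_erase hmu.1 hr.1 hs hbN, hshift,
    neg_one_pow_invCount_shift (mem_betaSet.2 ⟨b, hbN, rfl⟩)
      (hshift ▸ betaNum_notMem_betaSet hlam.1 hmu.1 hr.1 hs hbN),
    ← hshift, card_betaSet_between hlam.1 hmu.1 hr.1 hs hbN, ribbonHeight_eq_of_rows hs.rows]

theorem decompHeight_succ (ν : ℕ → ℕ → ℕ) (k : ℕ) :
    decompHeight ν (k + 1) = decompHeight ν k + ribbonHeight (ν (k + 1)) (ν k) :=
  sum_range_succ _ _

theorem sgnW_eq_of_isRibbonDecomp (ht : 0 < t) {k : ℕ} {ν : ℕ → ℕ → ℕ}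
    (hd : IsRibbonDecomp t mu lam k ν) (hN : plen lam ≤ N) :
    sgnW t lam N = (-1) ^ decompHeight ν k * sgnW t mu N := by
  induction k generalizing lam with
  | zero =>
    obtain ⟨h0, hk, -, -⟩ := hd
    rw [← hk, h0, decompHeight, sum_range_zero, pow_zero, one_mul]
  | succ k ih =>
    obtain ⟨h0, hk, hpart, hribs⟩ := hd
    have hlam : IsPartition lam := hk ▸ hpart (k + 1) le_rfl
    have hr : IsRibbon t lam (ν k) := hk ▸ hribs k k.lt_succ_self
    have hprev : IsRibbonDecomp t mu (ν k) k ν :=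
      ⟨h0, rfl, fun i hi => hpart i (by omega), fun i hi => hribs i (by omega)⟩
    rw [sgnW_eq_of_isRibbon ht hlam (hpart k k.le_succ) hr hN,
      ih hprev ((plen_le_plen hlam hr.1).trans hN), decompHeight_succ, hk, pow_add]
    ring

end BetaNumbers

theorem sgn_skew_eq_sgnW_general (t : ℕ) (ht : 2 ≤ t) (lam mu : ℕ → ℕ) (n : ℕ) (hn : plen lam ≤ n) :
    ∀ k ν, IsRibbonDecomp t mu lam k ν →
      (-1 : ℤ) ^ decompHeight ν k = sgnW t lam n * sgnW t mu n := by
  intro k ν hd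
  rw [sgnW_eq_of_isRibbonDecomp (by omega) hd hn, mul_assoc, sgnW_mul_self, mul_one]

/-- **Lemma.** For a `t`-tileable skew shape `λ/μ` and any `n ≥ l(λ)`,
`sgn_t(λ/μ) = sgn(w_t(λ;n)) · sgn(w_t(μ;n))`
(the left-hand side being `(-1)^{ht(D)}` for any ribbon decomposition `D`). -/
theorem sgn_skew_eq_sgnW (t : ℕ) (ht : 2 ≤ t) (lam mu : ℕ → ℕ)
    (hlam : IsPartition lam) (hmu : IsPartition mu) (hsub : SubP mu lam)
    (htile : Tileable t mu lam) (n : ℕ) (hn : plen lam ≤ n) :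
    ∀ k ν, IsRibbonDecomp t mu lam k ν →
      (-1 : ℤ) ^ decompHeight ν k = sgnW t lam n * sgnW t mu n :=
  sgn_skew_eq_sgnW_general t ht lam mu n hn

end
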